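/- arXiv:2102.04765 — 2 statements merged into one kernel-verified Lean document; each statement's English description precedes it below -/
import Mathlib

section
/- Let n ≡ 2 (mod 3) with n ≥ 8. Among all triples of positive integers (a,b,c) with a + b + c = n - 3, the minimum of 1/a + 1/b + 1/c equals 3/(n-5) + 6/(n-2), attained at a = (n-5)/3, b = c = (n-2)/3. -/
/-!
Write `n = 3m + 5`, so `a + b + c = 3m + 2` and the claimed minimum is `1/m + 2/(m+1)`.
On the integers `1/x` lies above the secant of `1/x` through `m` and `m + 1`, since
`(a - m)(a - m - 1) ≥ 0` for every integer `a`; summing this linear lower bound over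
`a, b, c` gives the minimum, which is attained at `(m, m + 1, m + 1)`.
-/

lemma inv_ge_secant {m a : ℕ} (hm : 0 < m) (ha : 0 < a) :
    1 / (m : ℝ) + 1 / ((m : ℝ) + 1) - a / ((m : ℝ) * (m + 1)) ≤ 1 / (a : ℝ) := by
  have hmR : (0 : ℝ) < m := by exact_mod_cast hm
  have haR : (0 : ℝ) < a := by exact_mod_cast ha
  have hprod : (0 : ℝ) ≤ ((a : ℝ) - m) * ((a : ℝ) - m - 1) := by
    rcases le_or_gt a m with h | h
    · have h' : (a : ℝ) ≤ m := by exact_mod_cast h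
      nlinarith
    · have h' : (m : ℝ) + 1 ≤ a := by exact_mod_cast h
      nlinarith
  have key : 1 / (m : ℝ) + 1 / ((m : ℝ) + 1) - a / ((m : ℝ) * (m + 1)) =
      1 / (a : ℝ) - ((a : ℝ) - m) * ((a : ℝ) - m - 1) / (a * m * (m + 1)) := by
    field_simp
    ring
  rw [key]
  exact sub_le_self _ (by positivity)

lemma inv_add_inv_add_inv_ge {m a b c : ℕ} (hm : 0 < m) (ha : 0 < a) (hb : 0 < b) (hc : 0 < c)
    (habc : a + b + c = 3 * m + 2) :
    1 / (m : ℝ) + 2 / ((m : ℝ) + 1) ≤ 1 / (a : ℝ) + 1 / (b : ℝ) + 1 / (c : ℝ) := by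
  have hsum : (a : ℝ) + b + c = 3 * m + 2 := by exact_mod_cast habc
  have secant_sum : 1 / (m : ℝ) + 2 / ((m : ℝ) + 1) =
      3 * (1 / (m : ℝ) + 1 / ((m : ℝ) + 1)) - ((a : ℝ) + b + c) / ((m : ℝ) * (m + 1)) := by
    rw [hsum]
    field_simp
    ring
  rw [secant_sum, add_div, add_div]
  linarith [inv_ge_secant hm ha, inv_ge_secant hm hb, inv_ge_secant hm hc]

theorem min_inv_sum_mod_two (n : ℕ) (hn : 8 ≤ n) (hmod : n % 3 = 2) :
    (∀ a b c : ℕ, 0 < a → 0 < b → 0 < c → a + b + c = n - 3 →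
      3 / ((n : ℝ) - 5) + 6 / ((n : ℝ) - 2) ≤ 1 / (a : ℝ) + 1 / (b : ℝ) + 1 / (c : ℝ)) ∧
    (n - 5) / 3 + (n - 2) / 3 + (n - 2) / 3 = n - 3 ∧
    1 / (((n - 5) / 3 : ℕ) : ℝ) + 1 / (((n - 2) / 3 : ℕ) : ℝ) + 1 / (((n - 2) / 3 : ℕ) : ℝ) =
      3 / ((n : ℝ) - 5) + 6 / ((n : ℝ) - 2) := by
  obtain ⟨m, rfl, hm⟩ : ∃ m, n = 3 * m + 5 ∧ 0 < m := ⟨n / 3 - 1, by omega, by omega⟩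
  have bound_eq : 3 / (((3 * m + 5 : ℕ) : ℝ) - 5) + 6 / (((3 * m + 5 : ℕ) : ℝ) - 2) =
      1 / (m : ℝ) + 2 / ((m : ℝ) + 1) := by
    push_cast
    rw [show (3 * m + 5 : ℝ) - 5 = 3 * m by ring, show (3 * m + 5 : ℝ) - 2 = 3 * (m + 1) by ring]
    field_simp
    ring
  refine ⟨fun a b c ha hb hc habc => ?_, by omega, ?_⟩
  · rw [bound_eq]
    exact inv_add_inv_add_inv_ge hm ha hb hc (by omega)
  · rw [bound_eq, show (3 * m + 5 - 5) / 3 = m by omega, show (3 * m + 5 - 2) / 3 = m + 1 by omega]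
    push_cast
    ring
end

section
/- The cost of the fractional tour x_{i,j,k} on the instance I³_{i,j,k} equals 3 + 2/(i+1) + 2/(j+1) + 2/(k+1). Consequently, the integrality ratio of I³_{i,j,k} is at least (4 + 2/(i+1) + 2/(j+1) + 2/(k+1)) / (3 + 2/(i+1) + 2/(j+1) + 2/(k+1)) = 1 + 1/(3 + 2(1/(i+1) + 1/(j+1) + 1/(k+1))). -/
open scoped Classical

/-- Manhattan (1-norm) distance in `ℝ³`. -/
noncomputable def dist1 (p q : ℝ × ℝ × ℝ) : ℝ :=
  |p.1 - q.1| + |p.2.1 - q.2.1| + |p.2.2 - q.2.2|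

/-- The vertices `X_s` of the instance `I³_{i,j,k}`. -/
noncomputable def ptX (i s : ℕ) : ℝ × ℝ × ℝ := (0, 0, (s : ℝ) / ((i : ℝ) + 1))

/-- The vertices `Y_s` of the instance `I³_{i,j,k}`. -/
noncomputable def ptY (i j s : ℕ) : ℝ × ℝ × ℝ :=
  (1 / ((i : ℝ) + 1) + 1 / ((j : ℝ) + 1), 0, (s : ℝ) / ((j : ℝ) + 1))

/-- The vertices `Z_s` of the instance `I³_{i,j,k}`. -/
noncomputable def ptZ (i k s : ℕ) : ℝ × ℝ × ℝ :=
  (1 / ((i : ℝ) + 1), 1 / ((k : ℝ) + 1), (s : ℝ) / ((k : ℝ) + 1))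

/-- The point set of the instance `I³_{i,j,k}`. -/
noncomputable def I3pts (i j k : ℕ) : Finset (ℝ × ℝ × ℝ) :=
  (Finset.range (i + 2)).image (ptX i) ∪ (Finset.range (j + 2)).image (ptY i j) ∪
    (Finset.range (k + 2)).image (ptZ i k)

/-- The length of the closed tour visiting the entries of `L` in cyclic order. -/
def cycleLength {α : Type*} (d : α → α → ℝ) (L : List α) : ℝ :=
  ((L.zip (L.rotate 1)).map (fun p => d p.1 p.2)).sum

/-- The cost of the fractional tour `x_{i,j,k}` on the instance `I³_{i,j,k}`:
weight 1 on consecutive edges of the three lines, weight 1/2 on the six triangle edges. -/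
noncomputable def I3fracCost (i j k : ℕ) : ℝ :=
  (∑ s ∈ Finset.range (i + 1), dist1 (ptX i s) (ptX i (s + 1))) +
  (∑ s ∈ Finset.range (j + 1), dist1 (ptY i j s) (ptY i j (s + 1))) +
  (∑ s ∈ Finset.range (k + 1), dist1 (ptZ i k s) (ptZ i k (s + 1))) +
  (1 / 2) * (dist1 (ptX i 0) (ptY i j 0) + dist1 (ptX i 0) (ptZ i k 0) +
    dist1 (ptY i j 0) (ptZ i k 0) + dist1 (ptX i (i + 1)) (ptY i j (j + 1)) +
    dist1 (ptX i (i + 1)) (ptZ i k (k + 1)) + dist1 (ptY i j (j + 1)) (ptZ i k (k + 1)))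

/-!
Measure heights in units of `1 / ((i+1)(j+1)(k+1))`. Then line `ℓ` carries the points at the
multiples of an integer step `d ℓ` up to `M = (i+1)(j+1)(k+1)`, and two distinct lines are at
horizontal distance `d ℓ + d ℓ'`. A tour leaves line `ℓ` as often as it enters it, say `E ℓ`
times, so its horizontal cost is `2 ∑ E ℓ * d ℓ`.

For the vertical cost, count the tour edges crossing each unit cell `[m, m + 1]` of `[0, M]`.
Their number is even, and at least the number of lines having an edge of their own across the
cell; with three lines this is at least twice that number minus `2`. A line is cut by the tour
into `E ℓ` runs; the bottom point of the line and the tops of the blocks of `d ℓ` cells that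
the runs leave partly uncovered lie in pairwise different runs, so at most `E ℓ - 1` blocks
are not entirely covered by edges of the line. The cells covered by line `ℓ` therefore number
at least `M - (E ℓ - 1) * d ℓ`, and summing up, every tour costs at least `4 * M + 2 ∑ d ℓ`.
-/

open Finset

section Translation

variable {G : Type*} [AddGroup G] [Fintype G] (g : G) (P : G → Prop) [DecidablePred P]

theorem card_filter_and_not_add_eq : #{a | P a ∧ ¬P (a + g)} = #{a | ¬P a ∧ P (a + g)} := by
  have hg : #{a | P (a + g)} = #{a | P a} := card_equiv (Equiv.addRight g) (by simp)
  have h1 := card_filter_add_card_filter_not (s := {a | P a}) (fun a => P (a + g))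
  have h2 := card_filter_add_card_filter_not (s := {a | P (a + g)}) P
  simp only [filter_filter, and_comm (a := P (_ + g))] at h1 h2
  omega

theorem even_card_filter_xor_add : Even #{a | Xor (P a) (P (a + g))} := by
  have hsplit : univ.filter (fun a => Xor (P a) (P (a + g))) =
      univ.filter (fun a => P a ∧ ¬P (a + g)) ∪ univ.filter (fun a => ¬P a ∧ P (a + g)) := by
    ext a
    simp only [mem_filter, mem_union, mem_univ, true_and]
    unfold Xor
    tauto
  rw [hsplit, card_union_of_disjoint (disjoint_filter.2 fun a _ h h' => h'.1 h.1),
    ← card_filter_and_not_add_eq]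
  exact ⟨_, rfl⟩

end Translation

theorem card_filter_xor_le_le_abs_sub (s : Finset ℕ) (a b : ℕ) :
    (#{m ∈ s | Xor (a ≤ m) (b ≤ m)} : ℤ) ≤ |(b : ℤ) - a| := by
  have hsub : {m ∈ s | Xor (a ≤ m) (b ≤ m)} ⊆ Ico (min a b) (max a b) := fun m hm => by
    have := (mem_filter.1 hm).2
    unfold Xor at this
    rw [mem_Ico]
    omega
  calc (#{m ∈ s | Xor (a ≤ m) (b ≤ m)} : ℤ) ≤ ((max a b - min a b : ℕ) : ℤ) := by
        exact_mod_cast (card_le_card hsub).trans_eq (Nat.card_Ico _ _)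
    _ = |(b : ℤ) - a| := by
        rw [Nat.cast_sub min_le_max, Nat.cast_max, Nat.cast_min, max_sub_min_eq_abs]

theorem card_le_card_filter_blocks_mul {U : Finset ℕ} {N d : ℕ} (hU : U ⊆ range (N * d)) :
    #U ≤ #{s ∈ range N | ∃ m ∈ U, s * d ≤ m ∧ m < s * d + d} * d := by
  calc #U ≤ #(({s ∈ range N | ∃ m ∈ U, s * d ≤ m ∧ m < s * d + d} : Finset ℕ).biUnion
        fun s => Ico (s * d) (s * d + d)) := by
        refine card_le_card fun m hm => ?_
        have hmN : m < N * d := mem_range.1 (hU hm)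
        have hd : 0 < d := Nat.pos_of_ne_zero (by rintro rfl; simp at hmN)
        have hlo := Nat.div_mul_le_self m d
        have hhi := Nat.lt_div_mul_add (a := m) hd
        exact mem_biUnion.2 ⟨m / d, mem_filter.2 ⟨mem_range.2 ((Nat.div_lt_iff_lt_mul hd).2 hmN),
          m, hm, hlo, hhi⟩, mem_Ico.2 ⟨hlo, hhi⟩⟩
    _ ≤ _ := card_biUnion_le
    _ = _ := by simp

theorem sum_ite_eq_sum_card_mul {α ι : Type*} [Fintype α] [Fintype ι] [DecidableEq ι]
    (a b : α → ι) (w : ι → ℕ) :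
    ∑ x, (if a x = b x then 0 else w (a x)) = ∑ ℓ, #{x | a x = ℓ ∧ b x ≠ ℓ} * w ℓ := by
  rw [← sum_fiberwise univ a]
  refine sum_congr rfl fun ℓ _ => ?_
  rw [sum_congr rfl fun x hx => by rw [(mem_filter.1 hx).2, ← ite_not], sum_ite,
    sum_const_zero, add_zero, sum_const, smul_eq_mul, filter_filter]
  simp only [eq_comm (a := ℓ)]

namespace CyclicTour

variable {n : ℕ} {ι : Type*} (line : ZMod n → ι) (z : ZMod n → ℕ)

def exits [NeZero n] [DecidableEq ι] (ℓ : ι) : Finset (ZMod n) :=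
  {t | line t = ℓ ∧ line (t + 1) ≠ ℓ}

/-- The edge from `t` to `t + 1` passes over the cell `[m, m + 1]`. -/
abbrev Crosses (m : ℕ) (t : ZMod n) : Prop := Xor (z t ≤ m) (z (t + 1) ≤ m)

def Covers (ℓ : ι) (m : ℕ) : Prop := ∃ t, line t = ℓ ∧ line (t + 1) = ℓ ∧ Crosses z m t

variable {line} {ℓ : ι}

theorem exists_run_to_exit [NeZero n] [DecidableEq ι] {u : ZMod n} (hu : line u = ℓ)
    (hoff : ∃ w, line w ≠ ℓ) : ∃ k : ℕ, (∀ j ≤ k, line (u + j) = ℓ) ∧ u + k ∈ exits line ℓ := by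
  obtain ⟨w, hw⟩ := hoff
  have hex : ∃ k : ℕ, line (u + k + 1) ≠ ℓ :=
    ⟨(w - u - 1).val, by rwa [ZMod.natCast_zmod_val, show u + (w - u - 1) + 1 = w by ring]⟩
  have hrun : ∀ j ≤ Nat.find hex, line (u + j) = ℓ := by
    rintro (_ | j) hj
    · simpa using hu
    · simpa [add_assoc] using not_not.1 (Nat.find_min hex (Nat.lt_of_succ_le hj))
  exact ⟨Nat.find hex, hrun, by simpa [exits, hrun _ le_rfl] using Nat.find_spec hex⟩

theorem iff_add_of_run (P : ZMod n → Prop)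
    (hP : ∀ t, line t = ℓ → line (t + 1) = ℓ → (P t ↔ P (t + 1)))
    {u : ZMod n} {k : ℕ} (hrun : ∀ j ≤ k, line (u + j) = ℓ) : P u ↔ P (u + k) := by
  induction k with
  | zero => simp
  | succ k ih =>
    rw [ih fun j hj => hrun j (by omega), Nat.cast_succ, ← add_assoc]
    exact hP _ (hrun k (by omega)) (by simpa [add_assoc] using hrun (k + 1) le_rfl)

/-- Vertices of `ℓ` separated by cells that `ℓ` does not cover lie in different runs, and
hence reach different exits. -/
theorem card_le_card_exits [NeZero n] [DecidableEq ι] {β : Type*} [LinearOrder β]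
    (S : Finset β) (v : β → ZMod n) (hv : ∀ a ∈ S, line (v a) = ℓ) (hoff : ∃ w, line w ≠ ℓ)
    (hsep : ∀ a ∈ S, ∀ b ∈ S, a < b → ∃ m, ¬Covers line z ℓ m ∧ z (v a) ≤ m ∧ m < z (v b)) :
    #S ≤ #(exits line ℓ) := by
  choose! k hk using fun a (ha : a ∈ S) => exists_run_to_exit (hv a ha) hoff
  have hiff : ∀ a ∈ S, ∀ m, ¬Covers line z ℓ m → (z (v a) ≤ m ↔ z (v a + k a) ≤ m) :=
    fun a ha m hm => iff_add_of_run (fun t => z t ≤ m)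
      (fun t ht ht' => by_contra fun hx => hm ⟨t, ht, ht', (xor_iff_not_iff _ _).2 hx⟩) (hk a ha).1
  have hne : ∀ a ∈ S, ∀ b ∈ S, a < b → v a + k a ≠ v b + k b := by
    intro a ha b hb hab heq
    obtain ⟨m, hm, ham, hmb⟩ := hsep a ha b hb hab
    have := (hiff a ha m hm).trans (heq ▸ (hiff b hb m hm).symm)
    omega
  refine card_le_card_of_injOn (fun a => v a + k a) (fun a ha => (hk a ha).2)
    fun a ha b hb heq => ?_
  by_contra hab
  rcases lt_or_gt_of_ne hab with hab | hab
  · exact hne a ha b hb hab heq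
  · exact hne b hb a ha hab heq.symm

theorem add_le_card_covers_add [NeZero n] [DecidableEq ι] {d N M : ℕ} (hNd : N * d = M)
    (hgrid : ∀ s ≤ N, ∃ t, line t = ℓ ∧ z t = s * d) (hoff : ∃ w, line w ≠ ℓ) :
    M + d ≤ #{m ∈ range M | Covers line z ℓ m} + #(exits line ℓ) * d := by
  set U := (range M).filter fun m => ¬Covers line z ℓ m
  set B := (range N).filter fun s => ∃ m ∈ U, s * d ≤ m ∧ m < s * d + d
  have hU : #U ≤ #B * d :=
    card_le_card_filter_blocks_mul fun m hm => hNd ▸ (mem_filter.1 hm).1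
  have hB : #B + 1 ≤ #(exits line ℓ) := by
    choose! T hT using hgrid
    have hS : ∀ a ∈ insert 0 (B.image (· + 1)), a ≤ N := by
      simp only [mem_insert, mem_image]
      rintro a (rfl | ⟨s, hs, rfl⟩)
      exacts [Nat.zero_le N, mem_range.1 (mem_filter.1 hs).1]
    have := card_le_card_exits z _ T (fun a ha => (hT a (hS a ha)).1) hoff fun a ha b hb hab => by
      obtain ⟨s, hs, rfl⟩ : ∃ s ∈ B, s + 1 = b := by
        simpa [((Nat.zero_le a).trans_lt hab).ne'] using hb
      obtain ⟨m, hmU, hsm, hms⟩ := (mem_filter.1 hs).2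
      refine ⟨m, (mem_filter.1 hmU).2, ?_, ?_⟩
      · rw [(hT a (hS a ha)).2]
        exact (Nat.mul_le_mul_right d (by omega)).trans hsm
      · rwa [(hT _ (hS _ hb)).2, add_mul, one_mul]
    rwa [card_insert_of_notMem (by simp), card_image_of_injective _ (add_left_injective 1)] at this
  have hsplit : #{m ∈ range M | Covers line z ℓ m} + #U = M :=
    (card_filter_add_card_filter_not _).trans (card_range M)
  have := Nat.mul_le_mul_right d hB
  rw [add_mul, one_mul] at this
  omega

theorem two_mul_card_covers_le [NeZero n] (line : ZMod n → Fin 3) (m : ℕ) :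
    2 * #{ℓ | Covers line z ℓ m} ≤ #{t | Crosses z m t} + 2 := by
  have hC : #{ℓ | Covers line z ℓ m} ≤ #{t | Crosses z m t} := by
    refine (card_le_card fun ℓ hℓ => ?_).trans (card_image_le (f := line))
    obtain ⟨t, ht, -, hx⟩ := (mem_filter.1 hℓ).2
    exact mem_image.2 ⟨t, mem_filter.2 ⟨mem_univ t, hx⟩, ht⟩
  have h3 : #{ℓ | Covers line z ℓ m} ≤ 3 := (card_filter_le _ _).trans_eq (card_fin 3)
  obtain ⟨r, hr⟩ : Even #{t | Crosses z m t} := by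
    convert even_card_filter_xor_add 1 fun t => z t ≤ m
  omega

theorem sum_card_crosses_le [NeZero n] (M : ℕ) :
    (∑ m ∈ range M, #{t | Crosses z m t} : ℤ) ≤ ∑ t, |(z (t + 1) : ℤ) - z t| := by
  have := sum_card_bipartiteAbove_eq_sum_card_bipartiteBelow (s := range M) (t := univ)
    fun m t => Crosses z m t
  simp only [bipartiteAbove, bipartiteBelow] at this
  rw [← Nat.cast_sum, this, Nat.cast_sum]
  exact sum_le_sum fun t _ => card_filter_xor_le_le_abs_sub (range M) (z t) (z (t + 1))

theorem sum_ite_ne_eq_two_mul_sum_card_exits [NeZero n] [Fintype ι] [DecidableEq ι]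
    (w : ι → ℕ) :
    ∑ t, (if line t = line (t + 1) then 0 else w (line t) + w (line (t + 1))) =
      2 * ∑ ℓ, #(exits line ℓ) * w ℓ := by
  have hsplit : ∀ t, (if line t = line (t + 1) then 0 else w (line t) + w (line (t + 1))) =
      (if line t = line (t + 1) then 0 else w (line t)) +
        (if line (t + 1) = line t then 0 else w (line (t + 1))) := fun t => by
    by_cases ht : line t = line (t + 1) <;> simp [ht, eq_comm]
  have hentries : ∀ ℓ, #{t | line (t + 1) = ℓ ∧ line t ≠ ℓ} = #(exits line ℓ) := fun ℓ => by
    unfold exits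
    rw [card_filter_and_not_add_eq]
    simp only [and_comm]
  simp only [hsplit, sum_add_distrib, sum_ite_eq_sum_card_mul, hentries]
  unfold exits
  ring

theorem four_mul_add_le_sum_cost [NeZero n] (line : ZMod n → Fin 3) (d N : Fin 3 → ℕ) (M : ℕ)
    (hNd : ∀ ℓ, N ℓ * d ℓ = M) (hgrid : ∀ ℓ, ∀ s ≤ N ℓ, ∃ t, line t = ℓ ∧ z t = s * d ℓ) :
    (4 * M + 2 * ∑ ℓ, d ℓ : ℤ) ≤ ∑ t, (|(z (t + 1) : ℤ) - z t| +
      ((if line t = line (t + 1) then 0 else d (line t) + d (line (t + 1)) : ℕ) : ℤ)) := by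
  have hoff : ∀ ℓ, ∃ w, line w ≠ ℓ := fun ℓ => by
    obtain ⟨t, ht, -⟩ := hgrid (ℓ + 1) 0 (Nat.zero_le _)
    exact ⟨t, by rw [ht]; fin_cases ℓ <;> decide⟩
  have hcover : 3 * M + ∑ ℓ, d ℓ ≤
      ∑ ℓ, #{m ∈ range M | Covers line z ℓ m} + ∑ ℓ, #(exits line ℓ) * d ℓ := by
    simpa [sum_add_distrib, mul_comm] using sum_le_sum fun ℓ (_ : ℓ ∈ univ) =>
      add_le_card_covers_add z (hNd ℓ) (hgrid ℓ) (hoff ℓ)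
  have hcells : 2 * ∑ ℓ, #{m ∈ range M | Covers line z ℓ m} ≤
      ∑ m ∈ range M, #{t | Crosses z m t} + 2 * M := by
    have := sum_card_bipartiteAbove_eq_sum_card_bipartiteBelow (s := univ) (t := range M)
      fun ℓ m => Covers line z ℓ m
    simp only [bipartiteAbove, bipartiteBelow] at this
    rw [this, mul_sum]
    simpa [sum_add_distrib, mul_comm] using sum_le_sum fun m (_ : m ∈ range M) =>
      two_mul_card_covers_le z line m
  have hvert := sum_card_crosses_le z M
  rw [sum_add_distrib, ← Nat.cast_sum, sum_ite_ne_eq_two_mul_sum_card_exits]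
  push_cast at hcover hcells ⊢
  linarith

end CyclicTour

theorem cycleLength_eq_sum {α : Type*} (d : α → α → ℝ) (L : List α) [NeZero L.length] :
    cycleLength d L =
      ∑ t : ZMod L.length, d (L[t.val]'t.val_lt) (L[(t + 1).val]'(t + 1).val_lt) := by
  have hlen : (L.zip (L.rotate 1)).length = L.length := by simp
  rw [cycleLength, ← Fin.sum_univ_fun_getElem]
  refine Fintype.sum_bijective
    (fun i : Fin (L.zip (L.rotate 1)).length => ((i : ℕ) : ZMod L.length))
    ⟨fun i i' h => ?_, fun t => ?_⟩ _ _ fun i => ?_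
  · have := congrArg ZMod.val h
    rw [ZMod.val_cast_of_lt (hlen ▸ i.isLt), ZMod.val_cast_of_lt (hlen ▸ i'.isLt)] at this
    exact Fin.ext this
  · exact ⟨⟨t.val, hlen.symm ▸ t.val_lt⟩, ZMod.natCast_zmod_val t⟩
  · have hi : i.val < L.length := hlen ▸ i.isLt
    simp [List.getElem_zip, List.getElem_rotate, ZMod.val_add, ZMod.val_cast_of_lt hi,
      ZMod.val_one_eq_one_mod]

noncomputable def I3pt (i j k : ℕ) : Fin 3 → ℕ → ℝ × ℝ × ℝ := ![ptX i, ptY i j, ptZ i k]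

def I3segments (i j k : ℕ) : Fin 3 → ℕ := ![i + 1, j + 1, k + 1]

theorem mem_I3pts_iff {i j k : ℕ} {p : ℝ × ℝ × ℝ} :
    p ∈ I3pts i j k ↔ ∃ ℓ, ∃ s ≤ I3segments i j k ℓ, I3pt i j k ℓ s = p := by
  simp only [I3pts, mem_union, mem_image, mem_range, Fin.exists_fin_succ, I3pt, I3segments]
  simp [Nat.lt_succ_iff, or_assoc]

theorem dist1_I3pt (i j k : ℕ) (ℓ ℓ' : Fin 3) (s s' : ℕ) :
    dist1 (I3pt i j k ℓ s) (I3pt i j k ℓ' s') =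
      |(s' : ℝ) / I3segments i j k ℓ' - s / I3segments i j k ℓ| +
        if ℓ = ℓ' then 0 else 1 / (I3segments i j k ℓ : ℝ) + 1 / I3segments i j k ℓ' := by
  fin_cases ℓ <;> fin_cases ℓ' <;>
    simp only [dist1, I3pt, I3segments, ptX, ptY, ptZ, Fin.zero_eta, Fin.isValue, Fin.mk_one,
      Fin.reduceFinMk, Fin.reduceEq, Matrix.cons_val', Matrix.cons_val_fin_one,
      Matrix.cons_val_zero, Matrix.cons_val_one, Matrix.cons_val, one_div, sub_self, abs_zero,
      add_zero, zero_add, zero_sub, neg_add_rev, abs_neg, abs_inv, sub_zero, add_sub_cancel_left,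
      sub_add_cancel_left, Nat.cast_add, Nat.cast_one, zero_ne_one, one_ne_zero, ↓reduceIte] <;>
    (try simp (disch := positivity) only [← neg_add, abs_neg, abs_of_pos]) <;>
    rw [abs_sub_comm] <;> ring

theorem I3fracCost_eq (i j k : ℕ) :
    I3fracCost i j k = 3 + 2 / ((i : ℝ) + 1) + 2 / ((j : ℝ) + 1) + 2 / ((k : ℝ) + 1) := by
  simp only [I3fracCost, show ptX i = I3pt i j k 0 from rfl, show ptY i j = I3pt i j k 1 from rfl,
    show ptZ i k = I3pt i j k 2 from rfl, dist1_I3pt]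
  simp only [Nat.cast_add, Nat.cast_one, I3segments, Fin.isValue, Matrix.cons_val_zero, ← sub_div,
    add_sub_cancel_left, one_div, inv_pos, Nat.cast_add_one_pos, abs_of_pos, ↓reduceIte, add_zero,
    sum_const, card_range, nsmul_eq_mul, Matrix.cons_val_one, Matrix.cons_val, CharP.cast_eq_zero,
    zero_div, sub_self, abs_zero, zero_ne_one, zero_add, Fin.reduceEq]
  field_simp
  ring

theorem I3_ratio_eq (i j k : ℕ) :
    (4 + 2 / ((i : ℝ) + 1) + 2 / ((j : ℝ) + 1) + 2 / ((k : ℝ) + 1)) /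
        (3 + 2 / ((i : ℝ) + 1) + 2 / ((j : ℝ) + 1) + 2 / ((k : ℝ) + 1)) =
      1 + 1 / (3 + 2 * (1 / ((i : ℝ) + 1) + 1 / ((j : ℝ) + 1) + 1 / ((k : ℝ) + 1))) := by
  field_simp
  ring

/-- Multiplying all heights by `I3denom` puts the points of line `ℓ` at the multiples of
`I3step ℓ`. -/
def I3denom (i j k : ℕ) : ℕ := (i + 1) * (j + 1) * (k + 1)

def I3step (i j k : ℕ) : Fin 3 → ℕ := ![(j + 1) * (k + 1), (i + 1) * (k + 1), (i + 1) * (j + 1)]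

theorem I3segments_mul_I3step (i j k : ℕ) (ℓ : Fin 3) :
    I3segments i j k ℓ * I3step i j k ℓ = I3denom i j k := by
  fin_cases ℓ <;>
    simp only [I3segments, I3step, I3denom, Fin.zero_eta, Fin.mk_one, Fin.reduceFinMk, Fin.isValue,
      Matrix.cons_val_zero, Matrix.cons_val_one, Matrix.cons_val] <;> ring

theorem I3denom_mul_dist1_I3pt (i j k : ℕ) (ℓ ℓ' : Fin 3) (s s' : ℕ) :
    I3denom i j k * dist1 (I3pt i j k ℓ s) (I3pt i j k ℓ' s') =
      |((s' * I3step i j k ℓ' : ℕ) : ℝ) - (s * I3step i j k ℓ : ℕ)| +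
        ((if ℓ = ℓ' then 0 else I3step i j k ℓ + I3step i j k ℓ' : ℕ) : ℝ) := by
  have hstep : ∀ ℓ, (I3step i j k ℓ : ℝ) = I3denom i j k / I3segments i j k ℓ := fun ℓ =>
    eq_div_of_mul_eq (Nat.cast_ne_zero.2 (by fin_cases ℓ <;> simp [I3segments]))
      (by rw [mul_comm]; exact_mod_cast I3segments_mul_I3step i j k ℓ)
  have hM : (0 : ℝ) ≤ I3denom i j k := Nat.cast_nonneg _
  rw [dist1_I3pt, mul_add, ← abs_of_nonneg hM, ← abs_mul, abs_of_nonneg hM]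
  split_ifs <;> push_cast [hstep] <;> ring_nf

theorem I3pt_injective2 (i j k : ℕ) : Function.Injective2 (I3pt i j k) := by
  intro ℓ ℓ' s s' h
  have hd := I3denom_mul_dist1_I3pt i j k ℓ ℓ' s s'
  rw [h, show dist1 (I3pt i j k ℓ' s') (I3pt i j k ℓ' s') = 0 by simp [dist1], mul_zero] at hd
  have hstep : ∀ ℓ, 0 < I3step i j k ℓ := fun ℓ => by fin_cases ℓ <;> simp [I3step]
  split_ifs at hd with hl
  · subst hl
    rw [Nat.cast_zero, add_zero, eq_comm, abs_eq_zero, sub_eq_zero] at hd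
    exact ⟨rfl, Nat.eq_of_mul_eq_mul_right (hstep ℓ) (by exact_mod_cast hd.symm)⟩
  · have := abs_nonneg (((s' * I3step i j k ℓ' : ℕ) : ℝ) - (s * I3step i j k ℓ : ℕ))
    push_cast at hd this
    linarith [(Nat.cast_pos (α := ℝ)).2 (hstep ℓ), (Nat.cast_pos (α := ℝ)).2 (hstep ℓ')]

theorem four_add_le_sum_dist1 {n : ℕ} [NeZero n] {i j k : ℕ} {g : ZMod n → ℝ × ℝ × ℝ}
    (hg : ∀ t, g t ∈ I3pts i j k) (hsurj : ∀ p ∈ I3pts i j k, ∃ t, g t = p) :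
    4 + 2 / ((i : ℝ) + 1) + 2 / ((j : ℝ) + 1) + 2 / ((k : ℝ) + 1) ≤
      ∑ t, dist1 (g t) (g (t + 1)) := by
  choose line s _ hpt using fun t => mem_I3pts_iff.1 (hg t)
  have hgrid : ∀ ℓ, ∀ r ≤ I3segments i j k ℓ, ∃ t, line t = ℓ ∧
      s t * I3step i j k (line t) = r * I3step i j k ℓ := fun ℓ r hr => by
    obtain ⟨t, ht⟩ := hsurj _ (mem_I3pts_iff.2 ⟨ℓ, r, hr, rfl⟩)
    obtain ⟨rfl, rfl⟩ := I3pt_injective2 i j k ((hpt t).trans ht)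
    exact ⟨t, rfl, rfl⟩
  have hbound := CyclicTour.four_mul_add_le_sum_cost (fun t => s t * I3step i j k (line t)) line
    (I3step i j k) (I3segments i j k) (I3denom i j k) (I3segments_mul_I3step i j k) hgrid
  have hM : (0 : ℝ) < I3denom i j k := by unfold I3denom; positivity
  rw [← mul_le_mul_iff_right₀ hM, mul_sum]
  simp only [← hpt, I3denom_mul_dist1_I3pt]
  have := (Int.cast_le (R := ℝ)).2 hbound
  push_cast at this ⊢
  refine le_of_eq_of_le ?_ this
  simp only [I3denom, I3step, Nat.cast_mul, Nat.cast_add, Nat.cast_one, Fin.sum_univ_three,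
    Fin.isValue, Matrix.cons_val_zero, Matrix.cons_val_one, Matrix.cons_val]
  field_simp
  ring

theorem four_add_le_cycleLength {i j k : ℕ} {L : List (ℝ × ℝ × ℝ)}
    (hL : L.toFinset = I3pts i j k) :
    4 + 2 / ((i : ℝ) + 1) + 2 / ((j : ℝ) + 1) + 2 / ((k : ℝ) + 1) ≤ cycleLength dist1 L := by
  have hmem : ∀ p, p ∈ L ↔ p ∈ I3pts i j k := fun p => by rw [← hL, List.mem_toFinset]
  have : NeZero L.length := ⟨fun h0 => by
    simpa [List.length_eq_zero_iff.1 h0] using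
      (hmem _).2 (mem_I3pts_iff.2 ⟨0, 0, Nat.zero_le _, rfl⟩)⟩
  rw [cycleLength_eq_sum]
  refine four_add_le_sum_dist1 (g := fun t => L[t.val]'t.val_lt)
    (fun t => (hmem _).1 (L.getElem_mem _)) fun p hp => ?_
  obtain ⟨m, hm, rfl⟩ := List.getElem_of_mem ((hmem p).2 hp)
  exact ⟨m, by simp only [ZMod.val_cast_of_lt hm]⟩

theorem I3_fractional_cost_and_ratio (i j k : ℕ) :
    I3fracCost i j k = 3 + 2 / ((i : ℝ) + 1) + 2 / ((j : ℝ) + 1) + 2 / ((k : ℝ) + 1) ∧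
    (4 + 2 / ((i : ℝ) + 1) + 2 / ((j : ℝ) + 1) + 2 / ((k : ℝ) + 1)) /
        (3 + 2 / ((i : ℝ) + 1) + 2 / ((j : ℝ) + 1) + 2 / ((k : ℝ) + 1)) =
      1 + 1 / (3 + 2 * (1 / ((i : ℝ) + 1) + 1 / ((j : ℝ) + 1) + 1 / ((k : ℝ) + 1))) ∧
    ∀ L : List (ℝ × ℝ × ℝ), L.Nodup → L.toFinset = I3pts i j k →
      1 + 1 / (3 + 2 * (1 / ((i : ℝ) + 1) + 1 / ((j : ℝ) + 1) + 1 / ((k : ℝ) + 1))) ≤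
        cycleLength dist1 L / I3fracCost i j k := by
  refine ⟨I3fracCost_eq i j k, I3_ratio_eq i j k, fun L _ hL => ?_⟩
  rw [← I3_ratio_eq, I3fracCost_eq]
  exact div_le_div_of_nonneg_right (four_add_le_cycleLength hL) (by positivity)
end
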